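/- arXiv:2206.01732 — 2 statements merged into one kernel-verified Lean document; each statement's English description precedes it below -/
import Mathlib

section
/- Let h : ℝ → ℝ be continuously differentiable and suppose there exists ε₀ > 0 such that |1 + h'(x)| ≥ ε₀ for all x. Then the map F(x) = x + h(x) is a bijection from ℝ to ℝ, and its inverse ρ is Lipschitz continuous with Lipschitz constant at most 1/ε₀. -/
/-! By Darboux's theorem the derivative `1 + h'` of `F`, never in `(-ε₀, ε₀)`, keeps one sign,
say `F' ≥ ε₀` (otherwise pass to `-F`). The mean value theorem then gives
`ε₀ |x - y| ≤ |F x - F y|`, which makes `F` injective and `F⁻¹` a `1/ε₀`-Lipschitz map,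
and `F x - F 0 ≥ ε₀ x` for `x ≥ 0` (and the reverse for `x ≤ 0`) makes the continuous map `F`
unbounded in both directions, hence surjective. -/

open Filter Function

section ExpandingDeriv

variable {f : ℝ → ℝ} {ε : ℝ}

theorem le_deriv_or_le_neg_deriv_of_le_abs_deriv (hf : Differentiable ℝ f) (hε : 0 < ε)
    (hf' : ∀ x, ε ≤ |deriv f x|) : (∀ x, ε ≤ deriv f x) ∨ ∀ x, ε ≤ -deriv f x := by
  have hne : ∀ x ∈ Set.univ, deriv f x ≠ 0 := fun x _ hx => by
    have := hf' x
    rw [hx, abs_zero] at this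
    linarith
  rcases hasDerivWithinAt_forall_lt_or_forall_gt_of_forall_ne convex_univ
      (fun x _ => (hf x).hasDerivAt.hasDerivWithinAt) hne with hneg | hpos
  · exact .inr fun x => by simpa [abs_of_neg (hneg x trivial)] using hf' x
  · exact .inl fun x => by simpa [abs_of_pos (hpos x trivial)] using hf' x

theorem mul_abs_sub_le_abs_sub_of_le_deriv (hf : Differentiable ℝ f)
    (hf' : ∀ x, ε ≤ deriv f x) (x y : ℝ) : ε * |x - y| ≤ |f x - f y| := by
  rcases le_total x y with hxy | hyx
  · have := mul_sub_le_image_sub_of_le_deriv hf hf' hxy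
    rw [abs_sub_comm x, abs_sub_comm (f x), abs_of_nonneg (sub_nonneg.2 hxy)]
    exact this.trans (le_abs_self _)
  · have := mul_sub_le_image_sub_of_le_deriv hf hf' hyx
    rw [abs_of_nonneg (sub_nonneg.2 hyx)]
    exact this.trans (le_abs_self _)

theorem surjective_of_pos_le_deriv (hf : Differentiable ℝ f) (hε : 0 < ε)
    (hf' : ∀ x, ε ≤ deriv f x) : Surjective f := by
  have grow := mul_sub_le_image_sub_of_le_deriv hf hf'
  refine hf.continuous.surjective ?_ ?_
  · refine tendsto_atTop_mono' _ ?_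
      (tendsto_atTop_add_const_left _ (f 0) (tendsto_id.const_mul_atTop hε))
    filter_upwards [eventually_ge_atTop 0] with x hx
    rw [id]
    linarith [grow hx]
  · refine tendsto_atBot_mono' _ ?_
      (tendsto_atBot_add_const_left _ (f 0) (tendsto_id.const_mul_atBot hε))
    filter_upwards [eventually_le_atBot 0] with x hx
    rw [id]
    linarith [grow hx]

theorem mul_abs_sub_le_abs_sub_of_le_abs_deriv (hf : Differentiable ℝ f) (hε : 0 < ε)
    (hf' : ∀ x, ε ≤ |deriv f x|) (x y : ℝ) : ε * |x - y| ≤ |f x - f y| := by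
  rcases le_deriv_or_le_neg_deriv_of_le_abs_deriv hf hε hf' with hpos | hneg
  · exact mul_abs_sub_le_abs_sub_of_le_deriv hf hpos x y
  · have := mul_abs_sub_le_abs_sub_of_le_deriv hf.neg
      (fun x => by rw [deriv.neg]; exact hneg x) x y
    rwa [Pi.neg_apply, Pi.neg_apply, neg_sub_neg, abs_sub_comm (f y)] at this

theorem surjective_of_le_abs_deriv (hf : Differentiable ℝ f) (hε : 0 < ε)
    (hf' : ∀ x, ε ≤ |deriv f x|) : Surjective f := by
  rcases le_deriv_or_le_neg_deriv_of_le_abs_deriv hf hε hf' with hpos | hneg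
  · exact surjective_of_pos_le_deriv hf hε hpos
  · have := surjective_of_pos_le_deriv hf.neg hε fun x => by rw [deriv.neg]; exact hneg x
    simpa [comp_def] using neg_involutive.surjective.comp this

end ExpandingDeriv

/-- If `h : ℝ → ℝ` is C¹ and `|1 + h'(x)| ≥ ε₀ > 0` everywhere, then
`F x = x + h x` is a bijection of ℝ whose inverse is `1/ε₀`-Lipschitz. -/
theorem stmt_0 (h : ℝ → ℝ) (hh : ContDiff ℝ 1 h) (ε₀ : ℝ) (hε₀ : 0 < ε₀)
    (hder : ∀ x : ℝ, ε₀ ≤ |1 + deriv h x|) :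
    Function.Bijective (fun x : ℝ => x + h x) ∧
    ∃ ρ : ℝ → ℝ,
      Function.LeftInverse ρ (fun x : ℝ => x + h x) ∧
      Function.RightInverse ρ (fun x : ℝ => x + h x) ∧
      ∀ x y : ℝ, |ρ x - ρ y| ≤ (1 / ε₀) * |x - y| := by
  set F : ℝ → ℝ := fun x => x + h x
  have hh' : Differentiable ℝ h := hh.differentiable one_ne_zero
  have hF : Differentiable ℝ F := differentiable_id.add hh'
  have hF' : ∀ x, ε₀ ≤ |deriv F x| := fun x => by
    rw [((hasDerivAt_id' x).fun_add (hh' x).hasDerivAt).deriv]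
    exact hder x
  have hexp := mul_abs_sub_le_abs_sub_of_le_abs_deriv hF hε₀ hF'
  have hinj : Injective F := fun a b hab => by
    have := hexp a b
    rw [hab, sub_self, abs_zero] at this
    exact sub_eq_zero.1 (abs_nonpos_iff.1 (nonpos_of_mul_nonpos_right this hε₀))
  let e := Equiv.ofBijective F ⟨hinj, surjective_of_le_abs_deriv hF hε₀ hF'⟩
  refine ⟨e.bijective, e.symm, e.symm_apply_apply, e.apply_symm_apply, fun x y => ?_⟩
  have := hexp (e.symm x) (e.symm y)
  rw [show F (e.symm x) = x from e.apply_symm_apply x,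
    show F (e.symm y) = y from e.apply_symm_apply y] at this
  rw [one_div_mul_eq_div, le_div_iff₀ hε₀, mul_comm]
  exact this
end

section
/- Suppose nonnegative measurable functions u₁, ..., u_N : [0,T] → [0,∞) satisfy, for constants a ≥ 0, C > 0 and all i and t, u_i(t) ≤ a + C ∫₀^t u_i(s) ds + (C/N) Σ_{j=1}^N ∫₀^t u_j(s) ds. Then there exists a constant C' depending only on C and T (not on N) such that u_i(t) ≤ C'·a for all i and t ∈ [0,T]. -/
/-!
If each `u i` satisfies `u i t ≤ a + K ∫₀ᵗ u i + L ∫₀ᵗ ū` with `ū = 𝔼 j, u j`, averaging over `i`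
gives the scalar inequality `ū t ≤ a + (K + L) ∫₀ᵗ ū`, so Grönwall bounds `ū` by
`a e^{(K + L) T}` whatever `N` is. Substituting this bound back leaves a scalar inequality for
each `u i` alone, and Grönwall applies once more. The integral form of Grönwall's inequality
follows from Mathlib's `le_gronwallBound_of_liminf_deriv_right_le` applied to the continuous
primitive `G t = ∫₀ᵗ f`, whose difference quotient over `[x, z]` is at most `a + K G z`.
-/

open MeasureTheory Set Filter Topology Real
open scoped BigOperators

theorem MeasureTheory.IntegrableOn.intervalIntegrable_of_mem_Icc {f : ℝ → ℝ} {a b x y : ℝ}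
    (hf : IntegrableOn f (Icc a b)) (hx : x ∈ Icc a b) (hy : y ∈ Icc a b) :
    IntervalIntegrable f volume x y :=
  (hf.mono_set (uIcc_subset_Icc hx hy)).intervalIntegrable

theorem monotoneOn_intervalIntegral_of_nonneg {f : ℝ → ℝ} {a b : ℝ}
    (hf : IntegrableOn f (Icc a b)) (hf0 : ∀ x ∈ Icc a b, 0 ≤ f x) :
    MonotoneOn (fun t => ∫ s in a..t, f s) (Icc a b) := by
  intro s hs t ht hst
  refine intervalIntegral.integral_mono_interval le_rfl hs.1 hst ?_
    (hf.intervalIntegrable_of_mem_Icc (left_mem_Icc.2 (hs.1.trans hs.2)) ht)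
  filter_upwards [ae_restrict_mem measurableSet_Ioc] with x hx
  exact hf0 x ⟨hx.1.le, hx.2.trans ht.2⟩

theorem mul_gronwallBound_zero_add (K ε x : ℝ) :
    K * gronwallBound 0 K ε x + ε = ε * exp (K * x) := by
  rcases eq_or_ne K 0 with rfl | hK
  · simp [gronwallBound_K0]
  · rw [gronwallBound_of_K_ne_0 hK]
    field_simp
    ring

theorem integral_sub_integral_le_of_le_add_mul_integral {f : ℝ → ℝ} {a K T x z : ℝ}
    (hK : 0 ≤ K) (hf : IntegrableOn f (Icc 0 T)) (hf0 : ∀ x ∈ Icc 0 T, 0 ≤ f x)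
    (hbound : ∀ t ∈ Icc 0 T, f t ≤ a + K * ∫ s in 0..t, f s)
    (hx : 0 ≤ x) (hxz : x ≤ z) (hz : z ≤ T) :
    (∫ s in 0..z, f s) - ∫ s in 0..x, f s ≤ (z - x) * (a + K * ∫ s in 0..z, f s) := by
  have hz' : z ∈ Icc 0 T := ⟨hx.trans hxz, hz⟩
  have hx' : x ∈ Icc 0 T := ⟨hx, hxz.trans hz⟩
  have h0 : (0 : ℝ) ∈ Icc 0 T := left_mem_Icc.2 (hx.trans hxz |>.trans hz)
  rw [intervalIntegral.integral_interval_sub_left (hf.intervalIntegrable_of_mem_Icc h0 hz')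
    (hf.intervalIntegrable_of_mem_Icc h0 hx')]
  calc (∫ s in x..z, f s) ≤ ∫ _ in x..z, a + K * ∫ s in 0..z, f s := by
        refine intervalIntegral.integral_mono_on hxz
          (hf.intervalIntegrable_of_mem_Icc hx' hz')
          intervalIntegrable_const fun y hy => ?_
        have hy' : y ∈ Icc 0 T := ⟨hx.trans hy.1, hy.2.trans hz⟩
        calc f y ≤ a + K * ∫ s in 0..y, f s := hbound y hy'
          _ ≤ a + K * ∫ s in 0..z, f s := by
            gcongr
            exact monotoneOn_intervalIntegral_of_nonneg hf hf0 hy' hz' hy.2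
    _ = (z - x) * (a + K * ∫ s in 0..z, f s) := by
        rw [intervalIntegral.integral_const, smul_eq_mul]

theorem le_mul_exp_of_le_add_mul_integral {f : ℝ → ℝ} {a K T : ℝ} (hK : 0 ≤ K)
    (hf : IntegrableOn f (Icc 0 T)) (hf0 : ∀ x ∈ Icc 0 T, 0 ≤ f x)
    (hbound : ∀ t ∈ Icc 0 T, f t ≤ a + K * ∫ s in 0..t, f s) :
    ∀ t ∈ Icc 0 T, f t ≤ a * exp (K * t) := by
  intro t ht
  set G : ℝ → ℝ := fun y => ∫ s in 0..y, f s
  have hGcont : ContinuousOn G (Icc 0 T) := by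
    simpa [uIcc_of_le (ht.1.trans ht.2)] using
      intervalIntegral.continuousOn_primitive_interval (f := f) (a := 0) (b := T)
        (by rwa [uIcc_of_le (ht.1.trans ht.2)])
  have hslope : ∀ x ∈ Ico 0 T, ∀ r, K * G x + a < r →
      ∃ᶠ z in 𝓝[>] x, (z - x)⁻¹ * (G z - G x) < r := by
    intro x hx r hr
    have hcont : ContinuousWithinAt G (Ioi x) x := by
      rw [← continuousWithinAt_Ioo_iff_Ioi hx.2]
      exact (hGcont x (Ico_subset_Icc_self hx)).mono
        (Ioo_subset_Icc_self.trans (Icc_subset_Icc_left hx.1))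
    have hlt : ∀ᶠ z in 𝓝[>] x, K * G z + a < r :=
      ((continuousWithinAt_const.mul hcont).add continuousWithinAt_const).eventually_lt
        continuousWithinAt_const hr
    refine (hlt.and (Ioo_mem_nhdsGT hx.2)).frequently.mono fun z ⟨hzr, hz⟩ => ?_
    rw [inv_mul_lt_iff₀ (sub_pos.2 hz.1)]
    calc G z - G x ≤ (z - x) * (a + K * G z) :=
          integral_sub_integral_le_of_le_add_mul_integral hK hf hf0 hbound hx.1 hz.1.le hz.2.le
      _ < (z - x) * r := mul_lt_mul_of_pos_left (by linarith) (sub_pos.2 hz.1)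
  have hGle := le_gronwallBound_of_liminf_deriv_right_le (δ := 0) hGcont hslope (by simp [G])
    fun _ _ => le_rfl
  calc f t ≤ a + K * G t := hbound t ht
    _ ≤ a + K * gronwallBound 0 K a t := by
        gcongr
        simpa using hGle t ht
    _ = a * exp (K * t) := by rw [add_comm, mul_gronwallBound_zero_add]

theorem intervalIntegral.integral_finset_expect {ι : Type*} {s : Finset ι} {f : ι → ℝ → ℝ}
    {a b : ℝ} (hf : ∀ i ∈ s, IntervalIntegrable (f i) volume a b) :
    ∫ x in a..b, 𝔼 i ∈ s, f i x = 𝔼 i ∈ s, ∫ x in a..b, f i x := by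
  simp_rw [Finset.expect_eq_sum_div_card]
  rw [intervalIntegral.integral_div, intervalIntegral.integral_finsetSum hf]

theorem le_mul_of_le_add_mul_integral_add_mul_integral_expect {ι : Type*} [Fintype ι]
    {u : ι → ℝ → ℝ} {a K L T : ℝ} (ha : 0 ≤ a) (hK : 0 ≤ K) (hL : 0 ≤ L)
    (hu : ∀ i, IntegrableOn (u i) (Icc 0 T)) (hu0 : ∀ i, ∀ t ∈ Icc 0 T, 0 ≤ u i t)
    (hbound : ∀ i, ∀ t ∈ Icc 0 T,
      u i t ≤ a + K * (∫ s in 0..t, u i s) + L * ∫ s in 0..t, 𝔼 j, u j s)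
    (i : ι) : ∀ t ∈ Icc 0 T, u i t ≤ (1 + L * T * exp ((K + L) * T)) * exp (K * T) * a := by
  have : Nonempty ι := ⟨i⟩
  have hint : ∀ j, ∀ t ∈ Icc 0 T, IntervalIntegrable (u j) volume 0 t := fun j t ht =>
    (hu j).intervalIntegrable_of_mem_Icc (left_mem_Icc.2 (ht.1.trans ht.2)) ht
  have hmean_int : IntegrableOn (fun s => 𝔼 j, u j s) (Icc 0 T) := by
    simp_rw [Finset.expect_eq_sum_div_card]
    exact (integrable_finsetSum _ fun j _ => hu j).div_const _
  have hmean0 : ∀ t ∈ Icc 0 T, 0 ≤ 𝔼 j, u j t := fun t ht =>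
    Finset.expect_nonneg fun j _ => hu0 j t ht
  have hmean_bound : ∀ t ∈ Icc 0 T,
      𝔼 j, u j t ≤ a + (K + L) * ∫ s in 0..t, 𝔼 j, u j s := by
    intro t ht
    calc 𝔼 j, u j t
        ≤ 𝔼 j, (a + K * (∫ s in 0..t, u j s) + L * ∫ s in 0..t, 𝔼 j, u j s) :=
          Finset.expect_le_expect fun j _ => hbound j t ht
      _ = a + K * (𝔼 j, ∫ s in 0..t, u j s) + L * ∫ s in 0..t, 𝔼 j, u j s := by
          rw [Finset.expect_add_distrib, Finset.expect_add_distrib, Fintype.expect_const,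
            Fintype.expect_const, Finset.mul_expect]
      _ = a + (K + L) * ∫ s in 0..t, 𝔼 j, u j s := by
          rw [intervalIntegral.integral_finset_expect fun j _ => hint j t ht]
          ring
  have hmean_le : ∀ t ∈ Icc 0 T, 𝔼 j, u j t ≤ a * exp ((K + L) * T) := fun t ht =>
    (le_mul_exp_of_le_add_mul_integral (add_nonneg hK hL) hmean_int hmean0 hmean_bound t ht).trans
      (by gcongr; exact ht.2)
  have hi_bound : ∀ t ∈ Icc 0 T,
      u i t ≤ (1 + L * T * exp ((K + L) * T)) * a + K * ∫ s in 0..t, u i s := by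
    intro t ht
    have hmean_integral : ∫ s in 0..t, 𝔼 j, u j s ≤ T * (a * exp ((K + L) * T)) :=
      calc ∫ s in 0..t, 𝔼 j, u j s ≤ ∫ _ in 0..t, a * exp ((K + L) * T) :=
            intervalIntegral.integral_mono_on ht.1
              (hmean_int.intervalIntegrable_of_mem_Icc (left_mem_Icc.2 (ht.1.trans ht.2)) ht)
              intervalIntegrable_const fun s hs => hmean_le s ⟨hs.1, hs.2.trans ht.2⟩
        _ ≤ T * (a * exp ((K + L) * T)) := by
            rw [intervalIntegral.integral_const, smul_eq_mul, sub_zero]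
            gcongr
            exact ht.2
    calc u i t ≤ a + K * (∫ s in 0..t, u i s) + L * ∫ s in 0..t, 𝔼 j, u j s := hbound i t ht
      _ ≤ a + K * (∫ s in 0..t, u i s) + L * (T * (a * exp ((K + L) * T))) := by gcongr
      _ = (1 + L * T * exp ((K + L) * T)) * a + K * ∫ s in 0..t, u i s := by ring
  intro t ht
  have hT : 0 ≤ T := ht.1.trans ht.2
  calc u i t ≤ (1 + L * T * exp ((K + L) * T)) * a * exp (K * t) :=
        le_mul_exp_of_le_add_mul_integral hK (hu i) (hu0 i) hi_bound t ht
    _ ≤ (1 + L * T * exp ((K + L) * T)) * a * exp (K * T) := by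
        gcongr
        exact ht.2
    _ = (1 + L * T * exp ((K + L) * T)) * exp (K * T) * a := by ring

theorem stmt_14_general (T C : ℝ) (hC : 0 < C) :
    ∃ C' : ℝ, 0 < C' ∧
      ∀ N : ℕ, 0 < N → ∀ (u : Fin N → ℝ → ℝ) (a : ℝ), 0 ≤ a →
      (∀ i, IntegrableOn (u i) (Set.Icc 0 T)) →
      (∀ i, ∀ t ∈ Set.Icc (0 : ℝ) T, 0 ≤ u i t) →
      (∀ i, ∀ t ∈ Set.Icc (0 : ℝ) T,
        u i t ≤ a + C * ∫ s in (0 : ℝ)..t, u i s +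
          (C / N) * ∑ j, ∫ s in (0 : ℝ)..t, u j s) →
      ∀ i, ∀ t ∈ Set.Icc (0 : ℝ) T, u i t ≤ C' * a := by
  refine ⟨(1 + (C * T) ^ 2 * exp ((C + C ^ 2 * T) * T)) * exp (C * T), by positivity, ?_⟩
  intro N _ u a ha hu hu0 hb i t ht
  have hT : 0 ≤ T := ht.1.trans ht.2
  have hint : ∀ j, ∀ t ∈ Icc 0 T, IntervalIntegrable (u j) volume 0 t := fun j t ht =>
    (hu j).intervalIntegrable_of_mem_Icc (left_mem_Icc.2 hT) ht
  have hbound : ∀ i, ∀ t ∈ Icc 0 T, u i t ≤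
      a + C * (∫ s in 0..t, u i s) + C ^ 2 * T * ∫ s in 0..t, 𝔼 j, u j s := by
    intro i t ht
    -- The binder of `∫ s in 0..t` extends to the end of the line in the hypothesis, so the
    -- mean-field term lies inside the integral and picks up a factor `t ≤ T`.
    have hmean : C / N * ∑ j, ∫ s in 0..t, u j s = C * ∫ s in 0..t, 𝔼 j, u j s := by
      rw [intervalIntegral.integral_finset_expect fun j _ => hint j t ht,
        Finset.expect_eq_sum_div_card, Finset.card_univ, Fintype.card_fin]
      ring
    have hmean0 : 0 ≤ ∫ s in 0..t, 𝔼 j, u j s :=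
      intervalIntegral.integral_nonneg ht.1 fun s hs =>
        Finset.expect_nonneg fun j _ => hu0 j s ⟨hs.1, hs.2.trans ht.2⟩
    calc u i t ≤ a + C * ∫ s in 0..t, u i s + C / N * ∑ j, ∫ s in 0..t, u j s := hb i t ht
      _ = a + C * (∫ s in 0..t, u i s) + C ^ 2 * t * ∫ s in 0..t, 𝔼 j, u j s := by
        rw [intervalIntegral.integral_add (hint i t ht) intervalIntegrable_const,
          intervalIntegral.integral_const, smul_eq_mul, hmean]
        ring
      _ ≤ a + C * (∫ s in 0..t, u i s) + C ^ 2 * T * ∫ s in 0..t, 𝔼 j, u j s := by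
        gcongr
        exact ht.2
  calc u i t ≤ (1 + C ^ 2 * T * T * exp ((C + C ^ 2 * T) * T)) * exp (C * T) * a :=
        le_mul_of_le_add_mul_integral_add_mul_integral_expect ha hC.le (by positivity) hu hu0
          hbound i t ht
    _ = (1 + (C * T) ^ 2 * exp ((C + C ^ 2 * T) * T)) * exp (C * T) * a := by ring

/-- A Grönwall-type lemma uniform in `N`: if nonnegative integrable
`u₁,…,u_N` satisfy
`u_i(t) ≤ a + C ∫₀ᵗ u_i + (C/N) Σ_j ∫₀ᵗ u_j` on `[0,T]`, then
`u_i(t) ≤ C'·a` for a constant `C'` depending only on `C` and `T`. -/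
theorem stmt_14 (T C : ℝ) (hT : 0 < T) (hC : 0 < C) :
    ∃ C' : ℝ, 0 < C' ∧
      ∀ N : ℕ, 0 < N → ∀ (u : Fin N → ℝ → ℝ) (a : ℝ), 0 ≤ a →
      (∀ i, IntegrableOn (u i) (Set.Icc 0 T)) →
      (∀ i, ∀ t ∈ Set.Icc (0 : ℝ) T, 0 ≤ u i t) →
      (∀ i, ∀ t ∈ Set.Icc (0 : ℝ) T,
        u i t ≤ a + C * ∫ s in (0 : ℝ)..t, u i s +
          (C / N) * ∑ j, ∫ s in (0 : ℝ)..t, u j s) →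
      ∀ i, ∀ t ∈ Set.Icc (0 : ℝ) T, u i t ≤ C' * a :=
  stmt_14_general T C hC
end
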